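/- Let Ω = (0,1)² with the uniform common prior (Lebesgue measure), λ(ω) = ω, and in the 3×3 game with a = 6 (so λ_i^0 = 3/5, f_i(λ) = (1-λ)/(2λ), g_i^1 = 1/3, and the condition on non-cooperation states includes P_i(K_j | ω) ≤ f_i(ω) for ω ∈ Λ_i \ K_i). Then the only pair of cooperation events is (∅, ∅): for any non-empty candidate (K_1, K_2) with λ_i* := inf{λ_i(ω) : ω ∈ K_i} ≥ 3/5, the equilibrium conditions force 1 - λ_j* = f_i(λ_i*) = (1-λ_i*)/(2λ_i*) for i = 1,2, hence λ_1*·λ_2* = 1/4, contradicting λ_1*, λ_2* ≥ 3/5. -/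
import Mathlib


open MeasureTheory

/-- The cooperation threshold `f(l) = (1-l)/(2l)`. -/
noncomputable def fThresh (l : ℝ) : ℝ := (1 - l) / (2 * l)

/-- In the 3×3 game with `a = 6`, the non-cooperation bound
`g(l) = min{g¹, g²(l), g³(l)} = min{1/3, f(l), 1/(5l)}`. -/
noncomputable def gBound (l : ℝ) : ℝ := min (1/3) (min (fThresh l) (1 / (5 * l)))

/-- The state space `Ω = (0,1)²`; a state is the pair of discount factors. -/
abbrev St : Type := ↥(Set.Ioo (0:ℝ) 1) × ↥(Set.Ioo (0:ℝ) 1)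

/-- Player 1's posterior on the event `A`, derived from the uniform (Lebesgue) common
prior on `(0,1)²` given his own coordinate: the Lebesgue measure of the section of `A`
at `ω₁`. -/
noncomputable def P1 (ω : St) (A : Set St) : ℝ :=
  (volume {y : ℝ | ∃ h : y ∈ Set.Ioo (0:ℝ) 1, (ω.1, (⟨y, h⟩ : ↥(Set.Ioo (0:ℝ) 1))) ∈ A}).toReal

/-- Player 2's posterior, symmetric to player 1's. -/
noncomputable def P2 (ω : St) (A : Set St) : ℝ :=
  (volume {x : ℝ | ∃ h : x ∈ Set.Ioo (0:ℝ) 1, ((⟨x, h⟩ : ↥(Set.Ioo (0:ℝ) 1)), ω.2) ∈ A}).toReal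

/-- `(K₁, K₂)` is a pair of cooperation events in the 3×3 game with `a = 6`: each `K_i`
is measurable with respect to player `i`'s information (depends only on his own
coordinate), `K_i ⊆ {λ_i ≥ 3/5}`, `P_i(K_j | ω) ≥ f_i(ω)` on `K_i`, and
`P_i(K_j | ω) ≤ min{1/3, f_i(ω), g_i³(ω)}` off `K_i`. -/
def IsCoopPair (K1 K2 : Set St) : Prop :=
  (∃ S : Set ℝ, K1 = {ω : St | (ω.1 : ℝ) ∈ S}) ∧
  (∃ S : Set ℝ, K2 = {ω : St | (ω.2 : ℝ) ∈ S}) ∧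
  K1 ⊆ {ω : St | 3/5 ≤ (ω.1 : ℝ)} ∧ K2 ⊆ {ω : St | 3/5 ≤ (ω.2 : ℝ)} ∧
  (∀ ω ∈ K1, fThresh (ω.1 : ℝ) ≤ P1 ω K2) ∧
  (∀ ω ∈ K2, fThresh (ω.2 : ℝ) ≤ P2 ω K1) ∧
  (∀ ω ∉ K1, P1 ω K2 ≤ gBound (ω.1 : ℝ)) ∧
  (∀ ω ∉ K2, P2 ω K1 ≤ gBound (ω.2 : ℝ))

lemma fThresh_pos {l : ℝ} (h0 : 0 < l) (h1 : l < 1) : 0 < fThresh l :=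
  div_pos (by linarith) (by linarith)

lemma fThresh_lt_fThresh {a x : ℝ} (ha : 0 < a) (hax : a < x) : fThresh x < fThresh a := by
  unfold fThresh
  rw [div_lt_div_iff₀ (by linarith) (by linarith)]
  nlinarith

lemma gBound_le_fThresh (l : ℝ) : gBound l ≤ fThresh l :=
  le_trans (min_le_right _ _) (min_le_left _ _)

lemma P1_eval {K2 : Set St} {S2 : Set ℝ} (h : K2 = {ω : St | (ω.2 : ℝ) ∈ S2}) (ω : St) :
    P1 ω K2 = (volume (S2 ∩ Set.Ioo (0:ℝ) 1)).toReal := by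
  unfold P1
  have hset : {y : ℝ | ∃ h : y ∈ Set.Ioo (0:ℝ) 1, (ω.1, (⟨y, h⟩ : ↥(Set.Ioo (0:ℝ) 1))) ∈ K2}
      = S2 ∩ Set.Ioo 0 1 := by
    ext y
    simp only [h, Set.mem_setOf_eq, Set.mem_inter_iff]
    exact ⟨fun ⟨h', hy⟩ => ⟨hy, h'⟩, fun ⟨hy, h'⟩ => ⟨h', hy⟩⟩
  rw [hset]

lemma P2_eval {K1 : Set St} {S1 : Set ℝ} (h : K1 = {ω : St | (ω.1 : ℝ) ∈ S1}) (ω : St) :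
    P2 ω K1 = (volume (S1 ∩ Set.Ioo (0:ℝ) 1)).toReal := by
  unfold P2
  have hset : {x : ℝ | ∃ h : x ∈ Set.Ioo (0:ℝ) 1, ((⟨x, h⟩ : ↥(Set.Ioo (0:ℝ) 1)), ω.2) ∈ K1}
      = S1 ∩ Set.Ioo 0 1 := by
    ext x
    simp only [h, Set.mem_setOf_eq, Set.mem_inter_iff]
    exact ⟨fun ⟨h', hx⟩ => ⟨hx, h'⟩, fun ⟨hx, h'⟩ => ⟨h', hx⟩⟩
  rw [hset]

/-- On `Ω = (0,1)²` with the uniform common prior, in the 3×3 game with `a = 6`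
(so `λ⁰ = 3/5`), the only pair of cooperation events is `(∅, ∅)`. -/
theorem no_cooperation_in_three_action_game :
    ∀ K1 K2 : Set St, IsCoopPair K1 K2 → K1 = ∅ ∧ K2 = ∅ := by
  intro K1 K2 hC
  obtain ⟨⟨S1, hS1⟩, ⟨S2, hS2⟩, hsub1, hsub2, hon1, hon2, hoff1, hoff2⟩ := hC
  have hP1 : ∀ ω : St, P1 ω K2 = (volume (S2 ∩ Set.Ioo (0:ℝ) 1)).toReal := P1_eval hS2
  have hP2 : ∀ ω : St, P2 ω K1 = (volume (S1 ∩ Set.Ioo (0:ℝ) 1)).toReal := P2_eval hS1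
  set A1 : Set ℝ := S1 ∩ Set.Ioo 0 1 with hA1def
  set A2 : Set ℝ := S2 ∩ Set.Ioo 0 1 with hA2def
  set p1 : ℝ := (volume A1).toReal with hp1def
  set p2 : ℝ := (volume A2).toReal with hp2def
  -- Main claim: K1 is empty.
  have hK1 : K1 = ∅ := by
    by_contra hne
    obtain ⟨ω0, hω0⟩ := Set.nonempty_iff_ne_empty.mpr hne
    have hω0S : (ω0.1 : ℝ) ∈ S1 := by rw [hS1] at hω0; exact hω0
    have hA1ne : A1.Nonempty := ⟨ω0.1, hω0S, ω0.1.2⟩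
    -- K2 section is nonempty
    have hf0 : fThresh (ω0.1 : ℝ) ≤ p2 := by rw [← hP1 ω0]; exact hon1 ω0 hω0
    have hp2pos : 0 < p2 := lt_of_lt_of_le (fThresh_pos ω0.1.2.1 ω0.1.2.2) hf0
    have hA2ne : A2.Nonempty := by
      rw [Set.nonempty_iff_ne_empty]
      intro h
      rw [hp2def, h] at hp2pos
      simp at hp2pos
    have hA1sub : ∀ x ∈ A1, (3:ℝ)/5 ≤ x := by
      intro x hx
      exact hsub1 (show ((⟨x, hx.2⟩, ⟨x, hx.2⟩) : St) ∈ K1 from by rw [hS1]; exact hx.1)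
    have hA2sub : ∀ x ∈ A2, (3:ℝ)/5 ≤ x := by
      intro x hx
      exact hsub2 (show ((⟨x, hx.2⟩, ⟨x, hx.2⟩) : St) ∈ K2 from by rw [hS2]; exact hx.1)
    have hbdd1 : BddBelow A1 := ⟨3/5, fun x hx => hA1sub x hx⟩
    have hbdd2 : BddBelow A2 := ⟨3/5, fun x hx => hA2sub x hx⟩
    set l1 := sInf A1 with hl1def
    set l2 := sInf A2 with hl2def
    have hl1 : (3:ℝ)/5 ≤ l1 := le_csInf hA1ne hA1sub
    have hl2 : (3:ℝ)/5 ≤ l2 := le_csInf hA2ne hA2sub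
    have hl1lt : l1 < 1 := by
      obtain ⟨a, ha⟩ := hA1ne
      exact lt_of_le_of_lt (csInf_le hbdd1 ha) ha.2.2
    have hl2lt : l2 < 1 := by
      obtain ⟨a, ha⟩ := hA2ne
      exact lt_of_le_of_lt (csInf_le hbdd2 ha) ha.2.2
    -- Fill: everything strictly above the infimum belongs to the section.
    have hfill2 : Set.Ioo l2 1 ⊆ A2 := by
      rintro x ⟨hlx, hx1⟩
      have hx0 : (0:ℝ) < x := lt_of_lt_of_le (by norm_num) (le_trans hl2 hlx.le)
      have hxI : x ∈ Set.Ioo (0:ℝ) 1 := ⟨hx0, hx1⟩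
      by_contra hxA
      have hxS : x ∉ S2 := fun h => hxA ⟨h, hxI⟩
      have hωn : ((ω0.1, ⟨x, hxI⟩) : St) ∉ K2 := by rw [hS2]; exact hxS
      have h1 : p1 ≤ fThresh x := by
        have := hoff2 _ hωn
        rw [hP2] at this
        exact this.trans (gBound_le_fThresh x)
      obtain ⟨a, haA, hax⟩ := exists_lt_of_csInf_lt hA2ne hlx
      have hωa : ((ω0.1, ⟨a, haA.2⟩) : St) ∈ K2 := by rw [hS2]; exact haA.1
      have h2 : fThresh a ≤ p1 := by have := hon2 _ hωa; rwa [hP2] at this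
      have h3 := fThresh_lt_fThresh (lt_of_lt_of_le (by norm_num) (hA2sub a haA)) hax
      linarith
    have hfill1 : Set.Ioo l1 1 ⊆ A1 := by
      rintro x ⟨hlx, hx1⟩
      have hx0 : (0:ℝ) < x := lt_of_lt_of_le (by norm_num) (le_trans hl1 hlx.le)
      have hxI : x ∈ Set.Ioo (0:ℝ) 1 := ⟨hx0, hx1⟩
      by_contra hxA
      have hxS : x ∉ S1 := fun h => hxA ⟨h, hxI⟩
      have hωn : ((⟨x, hxI⟩, ω0.2) : St) ∉ K1 := by rw [hS1]; exact hxS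
      have h1 : p2 ≤ fThresh x := by
        have := hoff1 _ hωn
        rw [hP1] at this
        exact this.trans (gBound_le_fThresh x)
      obtain ⟨a, haA, hax⟩ := exists_lt_of_csInf_lt hA1ne hlx
      have hωa : ((⟨a, haA.2⟩, ω0.2) : St) ∈ K1 := by rw [hS1]; exact haA.1
      have h2 : fThresh a ≤ p2 := by have := hon1 _ hωa; rwa [hP1] at this
      have h3 := fThresh_lt_fThresh (lt_of_lt_of_le (by norm_num) (hA1sub a haA)) hax
      linarith
    -- measure lower bounds
    have hmeas : ∀ (A : Set ℝ) (l : ℝ), l ≤ 1 → A ⊆ Set.Ioo 0 1 → Set.Ioo l 1 ⊆ A →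
        1 - l ≤ (volume A).toReal := by
      intro A l hl hAsub hAfill
      have hle : volume (Set.Ioo l 1) ≤ volume A := measure_mono hAfill
      have hfin : volume A ≤ volume (Set.Ioo (0:ℝ) 1) := measure_mono hAsub
      have hne : volume A ≠ ⊤ := by
        rw [Real.volume_Ioo] at hfin
        exact ne_top_of_le_ne_top (by simp) hfin
      calc 1 - l = (volume (Set.Ioo l 1)).toReal := by
            rw [Real.volume_Ioo, ENNReal.toReal_ofReal (by linarith)]
        _ ≤ (volume A).toReal := ENNReal.toReal_mono hne hle
    have hmeas1 : 1 - l1 ≤ p1 := hmeas A1 l1 hl1lt.le Set.inter_subset_right hfill1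
    have hmeas2 : 1 - l2 ≤ p2 := hmeas A2 l2 hl2lt.le Set.inter_subset_right hfill2
    -- below-infimum bounds
    have hbi1 : ∀ x : ℝ, 0 < x → x < l1 → p2 ≤ fThresh x := by
      intro x hx0 hxl
      have hxI : x ∈ Set.Ioo (0:ℝ) 1 := ⟨hx0, hxl.trans hl1lt⟩
      have hxA : x ∉ A1 := fun h => absurd (csInf_le hbdd1 h) (not_le.mpr hxl)
      have hxS : x ∉ S1 := fun h => hxA ⟨h, hxI⟩
      have hωn : ((⟨x, hxI⟩, ω0.2) : St) ∉ K1 := by rw [hS1]; exact hxS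
      have := hoff1 _ hωn
      rw [hP1] at this
      exact this.trans (gBound_le_fThresh x)
    have hbi2 : ∀ x : ℝ, 0 < x → x < l2 → p1 ≤ fThresh x := by
      intro x hx0 hxl
      have hxI : x ∈ Set.Ioo (0:ℝ) 1 := ⟨hx0, hxl.trans hl2lt⟩
      have hxA : x ∉ A2 := fun h => absurd (csInf_le hbdd2 h) (not_le.mpr hxl)
      have hxS : x ∉ S2 := fun h => hxA ⟨h, hxI⟩
      have hωn : ((ω0.1, ⟨x, hxI⟩) : St) ∉ K2 := by rw [hS2]; exact hxS
      have := hoff2 _ hωn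
      rw [hP2] at this
      exact this.trans (gBound_le_fThresh x)
    -- instantiate just below the infima
    set t1 : ℝ := (1 - l1)/20 with ht1def
    set t2 : ℝ := (1 - l2)/20 with ht2def
    have ht1 : 0 < t1 := by rw [ht1def]; linarith
    have ht2 : 0 < t2 := by rw [ht2def]; linarith
    have hx1pos : 0 < l1 - t1 := by rw [ht1def]; nlinarith
    have hx2pos : 0 < l2 - t2 := by rw [ht2def]; nlinarith
    have hb1 : 1 - l2 ≤ fThresh (l1 - t1) :=
      hmeas2.trans (hbi1 _ hx1pos (by linarith))
    have hb2 : 1 - l1 ≤ fThresh (l2 - t2) :=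
      hmeas1.trans (hbi2 _ hx2pos (by linarith))
    unfold fThresh at hb1 hb2
    rw [le_div_iff₀ (by linarith)] at hb1
    rw [le_div_iff₀ (by linarith)] at hb2
    rw [ht1def] at hb1
    rw [ht2def] at hb2
    nlinarith [hb1, hb2, hl1, hl2, hl1lt, hl2lt, mul_pos (sub_pos.mpr hl1lt) (sub_pos.mpr hl2lt)]
  refine ⟨hK1, ?_⟩
  -- K1 empty forces K2 empty
  rw [Set.eq_empty_iff_forall_notMem]
  intro ω hω
  have := hon2 ω hω
  rw [hP2] at this
  have hA1e : A1 = ∅ := by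
    rw [Set.eq_empty_iff_forall_notMem]
    intro x hx
    have : ((⟨x, hx.2⟩, ⟨x, hx.2⟩) : St) ∈ K1 := by rw [hS1]; exact hx.1
    rw [hK1] at this
    exact this
  have hp1z : p1 = 0 := by rw [hp1def, hA1e]; simp
  rw [hp1z] at this
  have hpos := fThresh_pos ω.2.2.1 ω.2.2.2
  linarith
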